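/- Fix k > 0 and ρ ∈ (-1, 1). Every global minimizer of L(β) = (kβ² + β - 1)² + 2(1-ρ)β²(1-β)k over ℝ is strictly positive. -/

import Mathlib

/-!
Write `m = -1/(2k) < 0` for the vertex of `k β² + β - 1`. Reflecting a point `β < m` across `m`
strictly lowers the loss, because `L(m - x) - L(m + x) = 4(1-ρ)k x (m(3m-2) + x²) > 0` for
`x > 0`. On `[m, 0]` the first square is at least `1 = L(0)`, so a minimizer there would make `0`
a minimizer as well, contradicting `L'(0) = -2`.
-/

def welfareLoss (k ρ β : ℝ) : ℝ := (k*β^2 + β - 1)^2 + 2*(1-ρ)*β^2*(1-β)*k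

theorem hasDerivAt_welfareLoss (k ρ β : ℝ) :
    HasDerivAt (welfareLoss k ρ)
      (2*(k*β^2 + β - 1)*(2*k*β + 1) + 2*(1-ρ)*k*(2*β - 3*β^2)) β := by
  have hid := hasDerivAt_id' β
  have hq := (((hid.pow 2).const_mul k).add hid).sub_const 1
  have hc := (((hid.pow 2).const_mul (2*(1-ρ))).mul (hid.const_sub 1)).mul_const k
  exact ((hq.pow 2).add hc).congr_deriv (by simp; ring)

theorem not_isLocalMin_welfareLoss_zero (k ρ : ℝ) : ¬ IsLocalMin (welfareLoss k ρ) 0 := by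
  intro h
  have := h.hasDerivAt_eq_zero (hasDerivAt_welfareLoss k ρ 0)
  norm_num at this

theorem welfareLoss_zero (k ρ : ℝ) : welfareLoss k ρ 0 = 1 := by
  norm_num [welfareLoss]

theorem one_le_welfareLoss {k ρ β : ℝ} (hρ : ρ ≤ 1) (hk : 0 ≤ k) (hβ : β ≤ 0)
    (hkβ : -1 ≤ k * β) : 1 ≤ welfareLoss k ρ β := by
  have hq : k*β^2 + β ≤ 0 := by nlinarith
  have hc : 0 ≤ 2*(1-ρ)*β^2*(1-β)*k := by
    have : 0 ≤ 1 - ρ := by linarith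
    have : 0 ≤ 1 - β := by linarith
    positivity
  unfold welfareLoss
  nlinarith

noncomputable def welfareLossAxis (k : ℝ) : ℝ := -1 / (2 * k)

theorem welfareLoss_axis_sub_sub_welfareLoss_axis_add {k : ℝ} (hk : k ≠ 0) (ρ x : ℝ) :
    welfareLoss k ρ (welfareLossAxis k - x) - welfareLoss k ρ (welfareLossAxis k + x) =
      4*(1-ρ)*k*x*(welfareLossAxis k * (3 * welfareLossAxis k - 2) + x^2) := by
  unfold welfareLoss welfareLossAxis
  field_simp
  ring

theorem welfareLoss_reflect_lt {k ρ β : ℝ} (hk : 0 < k) (hρ : ρ < 1)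
    (hβ : β < welfareLossAxis k) :
    welfareLoss k ρ (2 * welfareLossAxis k - β) < welfareLoss k ρ β := by
  set m := welfareLossAxis k
  have hm_neg : m < 0 := div_neg_of_neg_of_pos (by norm_num) (by positivity)
  have key := welfareLoss_axis_sub_sub_welfareLoss_axis_add hk.ne' ρ (m - β)
  rw [sub_sub_cancel, ← add_sub_assoc, ← two_mul] at key
  have : 0 < 4*(1-ρ)*k*(m - β)*(m * (3 * m - 2) + (m - β)^2) := by
    have : 0 < 1 - ρ := by linarith
    have : 0 < m - β := by linarith
    have : 0 < m * (3 * m - 2) := mul_pos_of_neg_of_neg hm_neg (by linarith)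
    positivity
  linarith

/-- Every global minimizer of L over ℝ is strictly positive. -/
theorem stmt_9 (k ρ : ℝ) (hk : 0 < k) (hρ : ρ ∈ Set.Ioo (-1 : ℝ) 1)
    (βs : ℝ)
    (hmin : ∀ b : ℝ, (k*βs^2 + βs - 1)^2 + 2*(1-ρ)*βs^2*(1-βs)*k ≤
      (k*b^2 + b - 1)^2 + 2*(1-ρ)*b^2*(1-b)*k) :
    0 < βs := by
  have hmin : ∀ b, welfareLoss k ρ βs ≤ welfareLoss k ρ b := hmin
  by_contra! hβs
  rcases lt_or_ge βs (welfareLossAxis k) with hleft | hright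
  · exact (hmin _).not_gt (welfareLoss_reflect_lt hk hρ.2 hleft)
  · have hkβ : -1 ≤ k * βs := by
      rw [welfareLossAxis, div_le_iff₀ (by positivity)] at hright
      nlinarith
    have hle : welfareLoss k ρ 0 ≤ welfareLoss k ρ βs :=
      (welfareLoss_zero k ρ).trans_le (one_le_welfareLoss hρ.2.le hk.le hβs hkβ)
    exact not_isLocalMin_welfareLoss_zero k ρ
      (Filter.Eventually.of_forall fun b => hle.trans (hmin b))
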